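/- Let k be a field, H a Hopf algebra over k, and B a right coideal subalgebra of H with quotient map π : H → H/HB⁺. Then the linear map H ⊗_k H → (H/HB⁺) ⊗_k H defined by x ⊗ y ↦ Σ π(x₍₁₎) ⊗ x₍₂₎y vanishes on the subspace J_B, and the induced map ξ : H ⊗_B H → (H/HB⁺) ⊗_k H is a linear isomorphism. -/

import Mathlib

open TensorProduct

noncomputable section

namespace HopfGalois

variable (k : Type*) (H : Type*) [Field k] [Ring H] [HopfAlgebra k H]

/-- The linear map `H ⊗ H → H`, `x ⊗ y ↦ ε(x) • y`. -/
def epsTensorId : H ⊗[k] H →ₗ[k] H :=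
  (TensorProduct.lid k H).toLinearMap ∘ₗ
    TensorProduct.map (Coalgebra.counit : H →ₗ[k] k) (LinearMap.id : H →ₗ[k] H)

/-- The linear map `H ⊗ H → H`, `x ⊗ y ↦ ε(y) • x`. -/
def idTensorEps : H ⊗[k] H →ₗ[k] H :=
  (TensorProduct.rid k H).toLinearMap ∘ₗ
    TensorProduct.map (LinearMap.id : H →ₗ[k] H) (Coalgebra.counit : H →ₗ[k] k)

/-- `x ⊗ y ↦ Σ x₍₁₎ ⊗ π_I(x₍₂₎) ⊗ y`. -/
def cotensorL (I : Submodule k H) : H ⊗[k] H →ₗ[k] H ⊗[k] ((H ⧸ I) ⊗[k] H) :=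
  TensorProduct.map (LinearMap.id : H →ₗ[k] H)
      (TensorProduct.map I.mkQ (LinearMap.id : H →ₗ[k] H))
    ∘ₗ (TensorProduct.assoc k H H H).toLinearMap
    ∘ₗ TensorProduct.map (Coalgebra.comul : H →ₗ[k] H ⊗[k] H) (LinearMap.id : H →ₗ[k] H)

/-- `x ⊗ y ↦ Σ x ⊗ π_I(y₍₁₎) ⊗ y₍₂₎`. -/
def cotensorR (I : Submodule k H) : H ⊗[k] H →ₗ[k] H ⊗[k] ((H ⧸ I) ⊗[k] H) :=
  TensorProduct.map (LinearMap.id : H →ₗ[k] H)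
    (TensorProduct.map I.mkQ (LinearMap.id : H →ₗ[k] H)
      ∘ₗ (Coalgebra.comul : H →ₗ[k] H ⊗[k] H))

/-- The cotensor product `H □^{H/I} H` as a subspace of `H ⊗ H`. -/
def cotensor (I : Submodule k H) : Submodule k (H ⊗[k] H) :=
  LinearMap.ker (cotensorL k H I - cotensorR k H I)

/-- The subspace of coinvariants `H^{co H/I}`:
`{x ∈ H : Σ π_I(x₍₁₎) ⊗ x₍₂₎ = π_I(1) ⊗ x}`. -/
def coinv (I : Submodule k H) : Submodule k H :=
  LinearMap.ker
    ((TensorProduct.map I.mkQ (LinearMap.id : H →ₗ[k] H)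
        ∘ₗ (Coalgebra.comul : H →ₗ[k] H ⊗[k] H))
      - TensorProduct.mk k (H ⧸ I) H (I.mkQ 1))

/-- A left ideal coideal: a left ideal `I` with `ε(I) = 0` and `Δ(I) ⊆ I ⊗ H + H ⊗ I`. -/
structure IsLeftIdealCoideal (I : Submodule k H) : Prop where
  mul_mem_left : ∀ (h x : H), x ∈ I → h * x ∈ I
  counit_zero : ∀ x ∈ I, (Coalgebra.counit : H →ₗ[k] k) x = 0
  comul_mem : ∀ x ∈ I, (Coalgebra.comul : H →ₗ[k] H ⊗[k] H) x ∈
    LinearMap.range (TensorProduct.map I.subtype (LinearMap.id : H →ₗ[k] H)) ⊔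
      LinearMap.range (TensorProduct.map (LinearMap.id : H →ₗ[k] H) I.subtype)

/-- A right coideal subalgebra: a subalgebra `B` with `Δ(B) ⊆ B ⊗ H`. -/
def IsRightCoidealSubalgebra (B : Subalgebra k H) : Prop :=
  ∀ b ∈ B, (Coalgebra.comul : H →ₗ[k] H ⊗[k] H) b ∈
    LinearMap.range
      (TensorProduct.map (Subalgebra.toSubmodule B).subtype (LinearMap.id : H →ₗ[k] H))

/-- The left ideal of `H` generated by a subset `S`, as a `k`-subspace of `H`. -/
def leftIdealGen (S : Set H) : Submodule k H :=
  Submodule.span k {z : H | ∃ h : H, ∃ b ∈ S, z = h * b}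

/-- `S⁺ = S ∩ ker ε`. -/
def plusPart (S : Set H) : Set H :=
  {b ∈ S | (Coalgebra.counit : H →ₗ[k] k) b = 0}

/-- `H·S⁺`, the left ideal of `H` generated by `S ∩ ker ε`. -/
def HSplus (S : Set H) : Submodule k H :=
  leftIdealGen k H (plusPart k H S)

/-- The subspace `J_B ⊆ H ⊗ H` spanned by `{xb ⊗ y − x ⊗ by : x, y ∈ H, b ∈ B}`,
so that `H ⊗_B H = (H ⊗ H)/J_B`. -/
def JB (S : Set H) : Submodule k (H ⊗[k] H) :=
  Submodule.span k
    {z : H ⊗[k] H | ∃ x y : H, ∃ b ∈ S, z = (x * b) ⊗ₜ[k] y - x ⊗ₜ[k] (b * y)}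

/-- `B` is the equalizer of the two canonical maps `H → H ⊗_B H`. -/
def equalizerCond (S : Set H) : Prop :=
  {h : H | h ⊗ₜ[k] (1 : H) - (1 : H) ⊗ₜ[k] h ∈ JB k H S} = S

/-- `H/I` is the coequalizer of `ε ⊗ id` and `id ⊗ ε` restricted to `H □^{H/I} H`, i.e.
`I` is the subspace spanned by `{Σ ε(xᵢ)yᵢ − Σ xᵢε(yᵢ) : Σ xᵢ ⊗ yᵢ ∈ H □^{H/I} H}`. -/
def coequalizerCond (I : Submodule k H) : Prop :=
  I = Submodule.map (epsTensorId k H - idTensorEps k H) (cotensor k H I)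


/-- The linear map `H ⊗ H → (H/I) ⊗ H`, `x ⊗ y ↦ Σ π_I(x₍₁₎) ⊗ x₍₂₎y`. -/
def xiAux (k H : Type*) [Field k] [Ring H] [HopfAlgebra k H] (I : Submodule k H) :
    H ⊗[k] H →ₗ[k] (H ⧸ I) ⊗[k] H :=
  TensorProduct.map I.mkQ (LinearMap.mul' k H)
    ∘ₗ (TensorProduct.assoc k H H H).toLinearMap
    ∘ₗ TensorProduct.map (Coalgebra.comul : H →ₗ[k] H ⊗[k] H) (LinearMap.id : H →ₗ[k] H)

/-!
For `f : H → H` let `β_f (x ⊗ y) = Σ x₍₁₎ ⊗ f(x₍₂₎) y`. By coassociativity `f ↦ β_f` turns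
convolution into composition, so the Galois map `β = β_id` is bijective with inverse `β_S`.
Since `ξ = (π ⊗ id) ∘ β`, it is surjective, and by right exactness of `⊗` its kernel is
`β_S (HB⁺ ⊗ H)`. For `b ∈ B` we have `Δb ∈ B ⊗ H` and `π(xb) = ε(b) π(x)`, which gives
`J_B ⊆ ker ξ`. Conversely, modulo `J_B`,
`β_S (hb ⊗ d) = Σ h₁b₁ ⊗ S(b₂)S(h₂)d ≡ Σ h₁ ⊗ b₁S(b₂)S(h₂)d = ε(b) Σ h₁ ⊗ S(h₂)d`,
which vanishes for `b ∈ B⁺`.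
-/

open Coalgebra HopfAlgebra LinearMap WithConv

section GaloisMap

variable {R A : Type*} [CommSemiring R] [Semiring A] [Algebra R A] [Coalgebra R A]

def galoisMap (f : WithConv (A →ₗ[R] A)) : A ⊗[R] A →ₗ[R] A ⊗[R] A :=
  lTensor A (mul' R A ∘ₗ rTensor A f.ofConv) ∘ₗ (TensorProduct.assoc R A A A).toLinearMap ∘ₗ
    rTensor A comul

lemma galoisMap_tmul (f : WithConv (A →ₗ[R] A)) {ι : Type*} {x : A} (r : Repr R x ι) (y : A) :
    galoisMap f (x ⊗ₜ y) = ∑ i ∈ r.index, r.left i ⊗ₜ (f (r.right i) * y) := by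
  simp [galoisMap, ← r.eq, sum_tmul]

lemma galoisMap_mul (f g : WithConv (A →ₗ[R] A)) :
    galoisMap (f * g) = galoisMap f ∘ₗ galoisMap g := by
  ext x y
  let r := ℛ R x
  let r₁ := fun i => ℛ R (r.left i)
  let r₂ := fun i => ℛ R (r.right i)
  have coassoc := congr(map LinearMap.id (mul' R A ∘ₗ map f.ofConv (mulRight R y ∘ₗ g.ofConv))
    $(sum_tmul_tmul_eq r r₁ r₂))
  simp only [map_sum, map_tmul, id_apply, comp_apply, mul'_apply, mulRight_apply] at coassoc
  simp [galoisMap_tmul _ r, (r₂ _).convMul_apply, galoisMap_tmul _ (r₁ _), Finset.sum_mul,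
    tmul_sum, mul_assoc, coassoc]

lemma galoisMap_one : galoisMap (1 : WithConv (A →ₗ[R] A)) = LinearMap.id := by
  ext x y
  have counit := congr(lTensor A (mulRight R y ∘ₗ Algebra.linearMap R A)
    $(sum_tmul_counit_eq (ℛ R x)))
  simp only [map_sum, lTensor_tmul, comp_apply, Algebra.linearMap_apply, mulRight_apply, map_one,
    one_mul] at counit
  simpa [galoisMap_tmul _ (ℛ R x)] using counit

end GaloisMap

section Hopf

variable (R A : Type*) [CommSemiring R] [Semiring A] [HopfAlgebra R A]

def galoisEquiv : A ⊗[R] A ≃ₗ[R] A ⊗[R] A :=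
  .ofLinearMap (galoisMap (toConv LinearMap.id)) (galoisMap (toConv (antipode R)))
    (by rw [← galoisMap_mul, id_mul_antipode, galoisMap_one])
    (by rw [← galoisMap_mul, antipode_mul_id, galoisMap_one])

lemma galoisEquiv_apply (t : A ⊗[R] A) :
    galoisEquiv R A t = galoisMap (toConv LinearMap.id) t := rfl

lemma galoisEquiv_symm_apply (t : A ⊗[R] A) :
    (galoisEquiv R A).symm t = galoisMap (toConv (antipode R)) t := rfl

end Hopf

section CoidealSubalgebra

variable {k H} {B : Subalgebra k H}

lemma xiAux_eq (I : Submodule k H) :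
    xiAux k H I = rTensor H I.mkQ ∘ₗ (galoisEquiv k H).toLinearMap := by
  ext x y
  simp [xiAux, galoisEquiv_apply, galoisMap_tmul _ (ℛ k x), ← (ℛ k x).eq, sum_tmul]

lemma xiAux_surjective (I : Submodule k H) : Function.Surjective (xiAux k H I) := by
  rw [xiAux_eq]
  exact (rTensor_surjective H I.mkQ_surjective).comp (galoisEquiv k H).surjective

lemma mkQ_HSplus_mul_of_mem {b : H} (hb : b ∈ B) (p : H) :
    (HSplus k H B).mkQ (p * b) = counit (R := k) b • (HSplus k H B).mkQ p := by
  rw [← map_smul, ← sub_eq_zero, ← map_sub, Submodule.mkQ_apply, Submodule.Quotient.mk_eq_zero]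
  have hplus : b - counit (R := k) b • 1 ∈ plusPart k H B :=
    ⟨B.sub_mem hb (B.smul_mem B.one_mem _), by simp⟩
  refine Submodule.subset_span ⟨p, _, hplus, ?_⟩
  rw [mul_sub, mul_smul_comm, mul_one]

lemma exists_repr_left_mem (hB : IsRightCoidealSubalgebra k H B) {b : H} (hb : b ∈ B) :
    ∃ r : Repr k b (H × H), ∀ i ∈ r.index, r.left i ∈ B := by
  obtain ⟨w, hw⟩ := hB b hb
  obtain ⟨s, rfl⟩ := TensorProduct.exists_finset w
  let e : (Subalgebra.toSubmodule B) × H ↪ H × H :=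
    ⟨fun p => ((p.1 : H), p.2), fun p q h => by simpa [Prod.ext_iff] using h⟩
  refine ⟨⟨s.map e, Prod.fst, Prod.snd, by simp [← hw]; rfl⟩, ?_⟩
  simp only [Finset.mem_map]
  rintro _ ⟨p, -, rfl⟩
  exact p.1.2

lemma JB_le_ker_xiAux (hB : IsRightCoidealSubalgebra k H B) :
    JB k H B ≤ ker (xiAux k H (HSplus k H B)) := by
  refine Submodule.span_le.mpr ?_
  rintro _ ⟨x, y, b, hb, rfl⟩
  obtain ⟨rb, hrb⟩ := exists_repr_left_mem hB hb
  rw [SetLike.mem_coe, mem_ker, map_sub, sub_eq_zero, xiAux_eq]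
  simp only [comp_apply, LinearEquiv.coe_coe, galoisEquiv_apply]
  rw [galoisMap_tmul _ ((ℛ k x).mul rb), galoisMap_tmul _ (ℛ k x)]
  simp only [Repr.mul_index, Repr.mul_left, Repr.mul_right, Finset.sum_product, id_apply,
    map_sum, rTensor_tmul]
  refine Finset.sum_congr rfl fun i _ => ?_
  set π := (HSplus k H B).mkQ
  calc ∑ l ∈ rb.index, π ((ℛ k x).left i * rb.left l) ⊗ₜ ((ℛ k x).right i * rb.right l * y)
      = ∑ l ∈ rb.index,
          π ((ℛ k x).left i) ⊗ₜ ((ℛ k x).right i * (counit (R := k) (rb.left l) • rb.right l) * y) :=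
        Finset.sum_congr rfl fun l hl => by
          rw [mkQ_HSplus_mul_of_mem (hrb l hl), smul_tmul, mul_smul_comm, smul_mul_assoc]
    _ = π ((ℛ k x).left i) ⊗ₜ ((ℛ k x).right i * (b * y)) := by
      rw [← tmul_sum, ← Finset.sum_mul, ← Finset.mul_sum, sum_counit_smul, mul_assoc]

lemma galoisMap_antipode_mul_tmul_mem_JB (hB : IsRightCoidealSubalgebra k H B) {b : H}
    (hb : b ∈ plusPart k H B) (h d : H) :
    galoisMap (toConv (antipode k)) ((h * b) ⊗ₜ d) ∈ JB k H B := by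
  obtain ⟨rb, hrb⟩ := exists_repr_left_mem hB hb.1
  set rh := ℛ k h
  set y := fun i l => antipode k (rh.right i * rb.right l) * d
  have hvanish : ∑ i ∈ rh.index, ∑ l ∈ rb.index, rh.left i ⊗ₜ[k] (rb.left l * y i l) = 0 := by
    refine Finset.sum_eq_zero fun i _ => ?_
    simp_rw [y, antipode_mul_antidistrib, mul_assoc, ← mul_assoc (rb.left _)]
    rw [← tmul_sum, ← Finset.sum_mul, sum_mul_antipode_eq_smul, hb.2, zero_smul, zero_mul,
      tmul_zero]
  rw [galoisMap_tmul _ (rh.mul rb)]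
  simp only [Repr.mul_index, Repr.mul_left, Repr.mul_right, Finset.sum_product]
  rw [← Submodule.sub_mem_iff_left _ (hvanish ▸ zero_mem _), ← Finset.sum_sub_distrib]
  refine sum_mem fun i _ => ?_
  rw [← Finset.sum_sub_distrib]
  exact sum_mem fun l hl => Submodule.subset_span ⟨_, _, _, hrb l hl, rfl⟩

lemma galoisMap_antipode_tmul_mem_JB (hB : IsRightCoidealSubalgebra k H B) {z : H}
    (hz : z ∈ HSplus k H B) (d : H) :
    galoisMap (toConv (antipode k)) (z ⊗ₜ d) ∈ JB k H B := by
  induction hz using Submodule.span_induction with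
  | mem _ hz =>
    obtain ⟨h, b, hb, rfl⟩ := hz
    exact galoisMap_antipode_mul_tmul_mem_JB hB hb h d
  | zero => simp
  | add _ _ _ _ h₁ h₂ => rw [add_tmul, map_add]; exact add_mem h₁ h₂
  | smul c _ _ h => rw [← smul_tmul', map_smul]; exact Submodule.smul_mem _ c h

lemma ker_xiAux_le_JB (hB : IsRightCoidealSubalgebra k H B) :
    ker (xiAux k H (HSplus k H B)) ≤ JB k H B := by
  intro t ht
  rw [mem_ker, xiAux_eq, comp_apply, ← mem_ker, rTensor_mkQ] at ht
  obtain ⟨v, hv⟩ := ht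
  rw [LinearEquiv.coe_coe] at hv
  rw [← (galoisEquiv k H).symm_apply_apply t, ← hv, galoisEquiv_symm_apply]
  clear hv
  induction v using TensorProduct.induction_on with
  | zero => simp
  | tmul z d => exact galoisMap_antipode_tmul_mem_JB hB z.2 d
  | add v w hv hw => rw [map_add, map_add]; exact add_mem hv hw

end CoidealSubalgebra

/-- For a right coideal subalgebra `B`, the map
`x ⊗ y ↦ Σ π(x₍₁₎) ⊗ x₍₂₎y` vanishes on `J_B` and the induced map
`ξ : H ⊗_B H → (H/HB⁺) ⊗ H` is a linear isomorphism. -/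
theorem xi_bijective (k H : Type*) [Field k] [Ring H] [HopfAlgebra k H]
    (B : Subalgebra k H) (hB : IsRightCoidealSubalgebra k H B) :
    ∃ hle : JB k H (B : Set H) ≤
        LinearMap.ker (xiAux k H (HSplus k H (B : Set H))),
      Function.Bijective
        ((JB k H (B : Set H)).liftQ (xiAux k H (HSplus k H (B : Set H))) hle) := by
  refine ⟨JB_le_ker_xiAux hB, ?_, ?_⟩
  · rw [← LinearMap.ker_eq_bot]
    exact Submodule.ker_liftQ_eq_bot _ _ _ (ker_xiAux_le_JB hB)
  · rw [← LinearMap.range_eq_top, Submodule.range_liftQ, LinearMap.range_eq_top]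
    exact xiAux_surjective _

end HopfGalois
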